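/- Let m ≥ 2 and n ≥ 1 be integers, and let p : ZMod (2m+1) → EuclideanSpace ℝ (Fin n) be unit vectors with p(i+1) ≠ p(i) for all i. If equality Σ_{i=0}^{2m} d(pᵢ, p_{i+1}) = 2mπ holds (indices mod 2m+1, d the spherical geodesic distance), then all the points pᵢ lie in a single linear subspace of dimension ≤ 2 of EuclideanSpace ℝ (Fin n), i.e. all vertices lie on a common great circle of S^{n-1}. -/
import Mathlib

open Real RealInnerProductSpace

/-- Spherical geodesic distance between points of the unit sphere `S^{n-1}`,
given as the angle `arccos ⟪p, q⟫` between unit vectors. -/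
noncomputable def sphDist {n : ℕ} (p q : EuclideanSpace ℝ (Fin n)) : ℝ :=
  Real.arccos ⟪p, q⟫

section sphHelpers

variable {n : ℕ}

lemma sph_arccos_anti {x y : ℝ} (h : x ≤ y) : Real.arccos y ≤ Real.arccos x := by
  unfold Real.arccos; have := Real.monotone_arcsin h; linarith

lemma sph_abs_inner_le_one {a b : EuclideanSpace ℝ (Fin n)} (ha : ‖a‖ = 1) (hb : ‖b‖ = 1) :
    |⟪a, b⟫| ≤ 1 := by
  have := abs_real_inner_le_norm a b
  rw [ha, hb] at this; linarith

lemma sphDist_self {a : EuclideanSpace ℝ (Fin n)} (ha : ‖a‖ = 1) : sphDist a a = 0 := by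
  have : ⟪a, a⟫ = (1 : ℝ) := by
    rw [real_inner_self_eq_norm_mul_norm, ha]; ring
  rw [sphDist, this, Real.arccos_one]

lemma sphDist_comm (a b : EuclideanSpace ℝ (Fin n)) : sphDist a b = sphDist b a := by
  rw [sphDist, sphDist, real_inner_comm]

lemma sph_norm_perp {a b : EuclideanSpace ℝ (Fin n)} (ha : ‖a‖ = 1) (hb : ‖b‖ = 1) :
    ‖a - ⟪a, b⟫ • b‖ = Real.sqrt (1 - ⟪a, b⟫ ^ 2) := by
  have h2 : ‖a - ⟪a, b⟫ • b‖ ^ 2 = 1 - ⟪a, b⟫ ^ 2 := by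
    rw [norm_sub_sq_real, real_inner_smul_right, norm_smul]
    simp [ha, hb, sq_abs]; ring
  rw [← Real.sqrt_sq (norm_nonneg _), h2]

lemma sph_inner_perp {a b c : EuclideanSpace ℝ (Fin n)} (hb : ‖b‖ = 1) :
    ⟪a - ⟪a, b⟫ • b, c - ⟪b, c⟫ • b⟫ = ⟪a, c⟫ - ⟪a, b⟫ * ⟪b, c⟫ := by
  simp only [inner_sub_left, inner_sub_right, real_inner_smul_left, real_inner_smul_right,
    real_inner_self_eq_norm_mul_norm, hb, real_inner_comm c b, real_inner_comm b a]
  ring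

lemma sphDist_triangle {a b c : EuclideanSpace ℝ (Fin n)}
    (ha : ‖a‖ = 1) (hb : ‖b‖ = 1) (hc : ‖c‖ = 1) :
    sphDist a c ≤ sphDist a b + sphDist b c := by
  have hs := abs_le.1 (sph_abs_inner_le_one ha hb)
  have ht := abs_le.1 (sph_abs_inner_le_one hb hc)
  rcases le_or_gt π (sphDist a b + sphDist b c) with h | h
  · exact (Real.arccos_le_pi _).trans h
  · have hcos : Real.cos (sphDist a b + sphDist b c) =
        ⟪a, b⟫ * ⟪b, c⟫ - Real.sqrt (1 - ⟪a, b⟫ ^ 2) * Real.sqrt (1 - ⟪b, c⟫ ^ 2) := by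
      rw [sphDist, sphDist, Real.cos_add, Real.cos_arccos hs.1 hs.2,
        Real.cos_arccos ht.1 ht.2, Real.sin_arccos, Real.sin_arccos]
    have hcs : -(‖a - ⟪a, b⟫ • b‖ * ‖c - ⟪b, c⟫ • b‖) ≤ ⟪a - ⟪a, b⟫ • b, c - ⟪b, c⟫ • b⟫ :=
      neg_abs_le _ |>.trans' (by
        have := abs_real_inner_le_norm (a - ⟪a, b⟫ • b) (c - ⟪b, c⟫ • b)
        linarith [neg_le_neg this, neg_abs_le ⟪a - ⟪a, b⟫ • b, c - ⟪b, c⟫ • b⟫])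
    have hge : Real.cos (sphDist a b + sphDist b c) ≤ ⟪a, c⟫ := by
      rw [hcos]
      have h1 := sph_norm_perp ha hb
      have h2 := sph_norm_perp (a := c) (b := b) hc hb
      rw [real_inner_comm b c] at h2
      have h3 := sph_inner_perp (a := a) (b := b) (c := c) hb
      rw [h1, h2] at hcs
      linarith
    calc Real.arccos ⟪a, c⟫ ≤ Real.arccos (Real.cos (sphDist a b + sphDist b c)) :=
          sph_arccos_anti hge
      _ = sphDist a b + sphDist b c := Real.arccos_cos
          (add_nonneg (Real.arccos_nonneg _) (Real.arccos_nonneg _)) h.le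

lemma sphDist_eq_mem_span {a b c : EuclideanSpace ℝ (Fin n)}
    (ha : ‖a‖ = 1) (hb : ‖b‖ = 1) (hc : ‖c‖ = 1) (hac : |⟪a, c⟫| < 1)
    (h : sphDist a b + sphDist b c = sphDist a c) :
    b ∈ Submodule.span ℝ ({a, c} : Set (EuclideanSpace ℝ (Fin n))) := by
  have hs := abs_le.1 (sph_abs_inner_le_one ha hb)
  have ht := abs_le.1 (sph_abs_inner_le_one hb hc)
  have hac' := abs_lt.1 hac
  set u := a - ⟪a, b⟫ • b with hu
  set v := c - ⟪b, c⟫ • b with hv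
  have hnu : ‖u‖ = Real.sqrt (1 - ⟪a, b⟫ ^ 2) := sph_norm_perp ha hb
  have hnv : ‖v‖ = Real.sqrt (1 - ⟪b, c⟫ ^ 2) := by
    have h2 := sph_norm_perp (a := c) (b := b) hc hb
    rw [real_inner_comm b c] at h2
    exact h2
  have hcoseq : ⟪a, c⟫ = ⟪a, b⟫ * ⟪b, c⟫ - ‖u‖ * ‖v‖ := by
    have := congrArg Real.cos h
    simp only [sphDist] at this
    rw [Real.cos_arccos hac'.1.le hac'.2.le, Real.cos_add, Real.cos_arccos hs.1 hs.2,
      Real.cos_arccos ht.1 ht.2, Real.sin_arccos, Real.sin_arccos] at this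
    rw [hnu, hnv, ← this]
  have hiuv : ⟪u, v⟫ = -(‖u‖ * ‖v‖) := by
    have h3 := sph_inner_perp (a := a) (b := b) (c := c) hb
    rw [← hu, ← hv] at h3
    rw [h3, hcoseq]; ring
  have hpar : ‖v‖ • u + ‖u‖ • v = 0 := by
    rcases eq_or_ne u 0 with h0 | h0
    · rw [h0, norm_zero, zero_smul, smul_zero, add_zero]
    rcases eq_or_ne v 0 with h0' | h0'
    · rw [h0', norm_zero, zero_smul, smul_zero, zero_add]
    · have he : ⟪u, -v⟫ = ‖u‖ * ‖-v‖ := by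
        rw [inner_neg_right, norm_neg, hiuv]; ring
      have := inner_eq_norm_mul_iff_real.1 he
      rw [norm_neg, smul_neg] at this
      rw [this]; simp
  have hKval : ‖v‖ * ⟪a, b⟫ + ‖u‖ * ⟪b, c⟫ = Real.sqrt (1 - ⟪a, c⟫ ^ 2) := by
    have hsin := congrArg Real.sin h
    simp only [sphDist] at hsin
    rw [Real.sin_add, Real.cos_arccos hs.1 hs.2,
      Real.cos_arccos ht.1 ht.2, Real.sin_arccos, Real.sin_arccos, Real.sin_arccos] at hsin
    rw [hnu, hnv, ← hsin]; ring
  have hK : 0 < ‖v‖ * ⟪a, b⟫ + ‖u‖ * ⟪b, c⟫ := by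
    rw [hKval]
    apply Real.sqrt_pos.2
    nlinarith [hac'.1, hac'.2]
  have hcomb : (‖v‖ * ⟪a, b⟫ + ‖u‖ * ⟪b, c⟫) • b = ‖v‖ • a + ‖u‖ • c := by
    have hpar' := hpar
    rw [hu, hv] at hpar'
    have key : ‖v‖ • a + ‖u‖ • c = (‖v‖ * ⟪a, b⟫ + ‖u‖ * ⟪b, c⟫) • b +
        (‖v‖ • (a - ⟪a, b⟫ • b) + ‖u‖ • (c - ⟪b, c⟫ • b)) := by
      rw [hu, hv]
      module
    rw [hpar', add_zero] at key
    exact key.symm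
  refine Submodule.mem_span_pair.2 ⟨(‖v‖ * ⟪a, b⟫ + ‖u‖ * ⟪b, c⟫)⁻¹ * ‖v‖,
    (‖v‖ * ⟪a, b⟫ + ‖u‖ * ⟪b, c⟫)⁻¹ * ‖u‖, ?_⟩
  rw [mul_smul, mul_smul, ← smul_add, hcomb.symm, ← mul_smul, inv_mul_cancel₀ hK.ne',
    one_smul]

lemma sph_eq_or_neg {a b : EuclideanSpace ℝ (Fin n)} (ha : ‖a‖ = 1) (hb : ‖b‖ = 1)
    (h : ¬ |⟪a, b⟫| < 1) : b = a ∨ b = -a := by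
  have h1 : |⟪a, b⟫| = 1 := le_antisymm (sph_abs_inner_le_one ha hb) (not_lt.1 h)
  rcases abs_eq (by norm_num : (0:ℝ) ≤ 1) |>.1 h1 with h2 | h2
  · left
    exact ((inner_eq_one_iff_of_norm_eq_one (𝕜 := ℝ) ha hb).1 h2).symm
  · right
    have h3 : ⟪a, -b⟫ = (1 : ℝ) := by rw [inner_neg_right, h2]; ring
    have := (inner_eq_one_iff_of_norm_eq_one (𝕜 := ℝ) ha (by rw [norm_neg, hb])).1 h3
    rw [this]; simp

lemma sph_rank2 (x y : EuclideanSpace ℝ (Fin n)) :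
    Module.finrank ℝ (Submodule.span ℝ ({x, y} : Set (EuclideanSpace ℝ (Fin n)))) ≤ 2 := by
  classical
  have hset : ({x, y} : Set (EuclideanSpace ℝ (Fin n))) = (↑({x, y} : Finset _) : Set _) := by
    simp
  rw [hset]
  refine (finrank_span_finset_le_card _).trans ?_
  exact (Finset.card_insert_le _ _).trans (by simp)

end sphHelpers

/-- If a closed geodesic polygonal curve on `S^{n-1}` with `2m+1` vertices has length
exactly `2mπ`, then all its vertices lie on a common great circle, i.e. in a linear
subspace of dimension at most 2. -/
theorem closed_spherical_polygon_length_eq_great_circle (m n : ℕ) (hm : 2 ≤ m) (hn : 1 ≤ n)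
    (p : ZMod (2 * m + 1) → EuclideanSpace ℝ (Fin n))
    (hnorm : ∀ i, ‖p i‖ = 1) (hne : ∀ i, p (i + 1) ≠ p i)
    (heq : ∑ i : ZMod (2 * m + 1), sphDist (p i) (p (i + 1)) = 2 * m * π) :
    ∃ S : Submodule ℝ (EuclideanSpace ℝ (Fin n)),
      Module.finrank ℝ S ≤ 2 ∧ ∀ i, p i ∈ S := by
  classical
  set q : ℕ → EuclideanSpace ℝ (Fin n) :=
    fun i => ((-1 : ℝ) ^ i) • p (i : ZMod (2 * m + 1)) with hq
  have hqnorm : ∀ i, ‖q i‖ = 1 := by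
    intro i
    simp [hq, norm_smul, hnorm]
  -- sum over range
  have hsum : ∑ i ∈ Finset.range (2 * m + 1),
      sphDist (p (i : ZMod (2 * m + 1))) (p ((i : ZMod (2 * m + 1)) + 1)) = 2 * m * π := by
    rw [← heq]
    refine (Finset.sum_nbij' (fun a : ZMod (2 * m + 1) => a.val)
      (fun i : ℕ => (i : ZMod (2 * m + 1))) ?_ ?_ ?_ ?_ ?_).symm
    · intro a _
      exact Finset.mem_range.2 (ZMod.val_lt a)
    · intro a _
      exact Finset.mem_univ _
    · intro a _
      exact ZMod.natCast_zmod_val a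
    · intro a ha
      exact ZMod.val_cast_of_lt (Finset.mem_range.1 ha)
    · intro a _
      rw [ZMod.natCast_zmod_val]
  -- edge flip
  have hedge : ∀ i : ℕ, sphDist (q i) (q (i + 1)) =
      π - sphDist (p (i : ZMod (2 * m + 1))) (p ((i : ZMod (2 * m + 1)) + 1)) := by
    intro i
    have hcast : ((i + 1 : ℕ) : ZMod (2 * m + 1)) = (i : ZMod (2 * m + 1)) + 1 := by
      push_cast; ring
    simp only [hq, hcast, sphDist, real_inner_smul_left, real_inner_smul_right]
    have hsign : (-1 : ℝ) ^ (i + 1) * ((-1 : ℝ) ^ i *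
        ⟪p (i : ZMod (2 * m + 1)), p ((i : ZMod (2 * m + 1)) + 1)⟫) =
        -⟪p (i : ZMod (2 * m + 1)), p ((i : ZMod (2 * m + 1)) + 1)⟫ := by
      rw [← mul_assoc, ← pow_add]
      have : Odd (i + 1 + i) := ⟨i, by ring⟩
      rw [this.neg_one_pow]; ring
    rw [hsign, Real.arccos_neg]
  -- partial sums
  set t : ℕ → ℝ := fun k => ∑ i ∈ Finset.range k, sphDist (q i) (q (i + 1)) with htdef
  have ht0 : t 0 = 0 := by simp [htdef]
  have htsucc : ∀ k, t (k + 1) = t k + sphDist (q k) (q (k + 1)) :=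
    fun k => Finset.sum_range_succ _ k
  have hlast : sphDist (p ((2 * m : ℕ) : ZMod (2 * m + 1))) (p (((2 * m : ℕ) : ZMod (2 * m + 1)) + 1))
      = sphDist (p ((2 * m : ℕ) : ZMod (2 * m + 1))) (p 0) := by
    have h0 : (((2 * m : ℕ) : ZMod (2 * m + 1)) + 1) = 0 := by
      rw [show (((2 * m : ℕ)) : ZMod (2 * m + 1)) + 1 = ((2 * m + 1 : ℕ) : ZMod (2 * m + 1)) by
        push_cast; ring, ZMod.natCast_self]
    rw [h0]
  have hq0 : q 0 = p 0 := by simp [hq]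
  have hq2m : q (2 * m) = p ((2 * m : ℕ) : ZMod (2 * m + 1)) := by
    simp only [hq]
    rw [(even_two_mul m).neg_one_pow, one_smul]
  have hT : t (2 * m) = sphDist (q 0) (q (2 * m)) := by
    have h1 : t (2 * m) = 2 * m * π - ∑ i ∈ Finset.range (2 * m),
        sphDist (p (i : ZMod (2 * m + 1))) (p ((i : ZMod (2 * m + 1)) + 1)) := by
      rw [htdef]
      simp only
      rw [Finset.sum_congr rfl (fun i _ => hedge i), Finset.sum_sub_distrib,
        Finset.sum_const, Finset.card_range, nsmul_eq_mul]
      push_cast; ring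
    have h2 := Finset.sum_range_succ
      (fun i => sphDist (p (i : ZMod (2 * m + 1))) (p ((i : ZMod (2 * m + 1)) + 1))) (2 * m)
    rw [hsum] at h2
    rw [h1, hq0, hq2m, sphDist_comm]
    rw [hlast] at h2
    linarith
  -- chain upper bound
  have hub : ∀ b a, a ≤ b → sphDist (q a) (q b) ≤ t b - t a := by
    intro b
    induction b with
    | zero =>
      intro a ha
      obtain rfl := Nat.le_zero.1 ha
      rw [sphDist_self (hqnorm 0)]; simp
    | succ b ih =>
      intro a ha
      rcases eq_or_lt_of_le ha with h | h
      · subst h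
        rw [sphDist_self (hqnorm _)]; simp
      · have ha' : a ≤ b := Nat.lt_succ_iff.1 h
        calc sphDist (q a) (q (b + 1))
            ≤ sphDist (q a) (q b) + sphDist (q b) (q (b + 1)) :=
              sphDist_triangle (hqnorm a) (hqnorm b) (hqnorm (b + 1))
          _ ≤ (t b - t a) + sphDist (q b) (q (b + 1)) := by linarith [ih a ha']
          _ = t (b + 1) - t a := by rw [htsucc]; ring
  -- segment equality
  have hseg : ∀ a b, a ≤ b → b ≤ 2 * m → sphDist (q a) (q b) = t b - t a := by
    intro a b hab hb
    have h1 := hub a 0 (Nat.zero_le a)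
    have h2 := hub b a hab
    have h3 := hub (2 * m) b hb
    have h4 : sphDist (q 0) (q (2 * m)) ≤
        sphDist (q 0) (q a) + (sphDist (q a) (q b) + sphDist (q b) (q (2 * m))) := by
      calc sphDist (q 0) (q (2 * m))
          ≤ sphDist (q 0) (q b) + sphDist (q b) (q (2 * m)) :=
            sphDist_triangle (hqnorm 0) (hqnorm b) (hqnorm (2 * m))
        _ ≤ (sphDist (q 0) (q a) + sphDist (q a) (q b)) + sphDist (q b) (q (2 * m)) := by
            linarith [sphDist_triangle (hqnorm 0) (hqnorm a) (hqnorm b)]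
        _ = _ := by ring
    rw [← hT] at h4
    linarith
  -- membership transfer
  have hpmem : ∀ S : Submodule ℝ (EuclideanSpace ℝ (Fin n)),
      (∀ i, i ≤ 2 * m → q i ∈ S) → ∀ i, p i ∈ S := by
    intro S hS i
    have hv : i.val ≤ 2 * m := Nat.lt_succ_iff.1 (ZMod.val_lt i)
    have h1 := hS i.val hv
    have h2 : p i = ((-1 : ℝ) ^ i.val) • q i.val := by
      simp only [hq, ZMod.natCast_zmod_val, ← mul_smul, ← pow_add]
      have : Even (i.val + i.val) := ⟨i.val, rfl⟩
      rw [this.neg_one_pow, one_smul]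
    rw [h2]
    exact S.smul_mem _ h1
  -- main case analysis
  by_cases hO : |⟪q 0, q (2 * m)⟫| < 1
  · refine ⟨Submodule.span ℝ ({q 0, q (2 * m)} : Set _), sph_rank2 _ _, ?_⟩
    apply hpmem
    intro i hi
    have e1 := hseg 0 i (Nat.zero_le i) hi
    have e2 := hseg i (2 * m) hi le_rfl
    have hsumd : sphDist (q 0) (q i) + sphDist (q i) (q (2 * m)) = sphDist (q 0) (q (2 * m)) := by
      rw [e1, e2, ← hT]; ring
    exact sphDist_eq_mem_span (hqnorm 0) (hqnorm i) (hqnorm (2 * m)) hO hsumd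
  · have hpm := sph_eq_or_neg (hqnorm 0) (hqnorm (2 * m)) hO
    by_cases hdep : ∃ j, j ≤ 2 * m ∧ q j ∉ Submodule.span ℝ ({q 0} : Set _)
    · obtain ⟨j, hj, hjn⟩ := hdep
      have hq0j : |⟪q 0, q j⟫| < 1 := by
        by_contra hcon
        rcases sph_eq_or_neg (hqnorm 0) (hqnorm j) hcon with h | h
        · exact hjn (h ▸ Submodule.mem_span_singleton_self _)
        · exact hjn (h ▸ (Submodule.span ℝ _).neg_mem (Submodule.mem_span_singleton_self _))
      refine ⟨Submodule.span ℝ ({q 0, q j} : Set _), sph_rank2 _ _, ?_⟩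
      apply hpmem
      intro i hi
      rcases le_total i j with hij | hij
      · have e1 := hseg 0 i (Nat.zero_le i) (hij.trans hj)
        have e2 := hseg i j hij hj
        have e3 := hseg 0 j (Nat.zero_le j) hj
        have hsumd : sphDist (q 0) (q i) + sphDist (q i) (q j) = sphDist (q 0) (q j) := by
          rw [e1, e2, e3]; ring
        exact sphDist_eq_mem_span (hqnorm 0) (hqnorm i) (hqnorm j) hq0j hsumd
      · have e1 := hseg j i hij hi
        have e2 := hseg i (2 * m) hi le_rfl
        have e3 := hseg j (2 * m) hj le_rfl
        have hsumd : sphDist (q j) (q i) + sphDist (q i) (q (2 * m)) =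
            sphDist (q j) (q (2 * m)) := by
          rw [e1, e2, e3]; ring
        have hj2m : |⟪q j, q (2 * m)⟫| < 1 := by
          rcases hpm with h | h
          · rw [h, real_inner_comm]; exact hq0j
          · rw [h, inner_neg_right, abs_neg, real_inner_comm]; exact hq0j
        have hmem := sphDist_eq_mem_span (hqnorm j) (hqnorm i) (hqnorm (2 * m)) hj2m hsumd
        have hle : Submodule.span ℝ ({q j, q (2 * m)} : Set _) ≤
            Submodule.span ℝ ({q 0, q j} : Set _) := by
          apply Submodule.span_le.2
          intro x hx
          rcases hx with hx | hx
          · subst hx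
            exact Submodule.subset_span (Set.mem_insert_of_mem _ rfl)
          · rcases Set.mem_singleton_iff.1 hx with rfl
            rcases hpm with h | h
            · rw [h]
              exact Submodule.subset_span (Set.mem_insert _ _)
            · rw [h]
              exact (Submodule.span ℝ _).neg_mem
                (Submodule.subset_span (Set.mem_insert _ _))
        exact hle hmem
    · push_neg at hdep
      refine ⟨Submodule.span ℝ ({q 0} : Set _), ?_, ?_⟩
      · have hne0 : q 0 ≠ 0 := by
          intro h
          have := hqnorm 0
          rw [h, norm_zero] at this
          norm_num at this
        rw [finrank_span_singleton hne0]
        norm_num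
      · exact hpmem _ hdep
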